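/- arXiv:2109.03148 — 6 statements merged into one kernel-verified Lean document; each statement's English description precedes it below -/
import Mathlib

section
/- Let T be a totally unimodular integer matrix with k rows and n columns such that the cone C = {x ∈ R^n : Tx ≤ 0} is pointed. Let r be an extremal ray of C that is integral and whose coordinates have greatest common divisor 1. Then for every vector d ∈ {-1,0,1}^n such that appending d as a row to T yields a totally unimodular matrix, the inner product d^T r lies in {-1, 0, 1}. -/
/-- `d` is TU-appendable to `T`: appending `dᵀ` as an extra row keeps the matrix
totally unimodular. -/
def TUAppendable {k n : ℕ} (T : Matrix (Fin k) (Fin n) ℤ) (d : Fin n → ℤ) : Prop :=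
  (Matrix.fromRows T (Matrix.of fun (_ : Unit) (j : Fin n) => d j)).IsTotallyUnimodular

/-!
Let `α = d ⬝ z`; assume `α ≠ 0`. Extremality of `z` forces every vector that satisfies the
constraints tight at `z` with equality to be a multiple of `z`, so these rows of `T` together
with `d` have trivial common kernel. Hence `n` of them form a nonsingular square submatrix `B` of
the totally unimodular matrix `[T; dᵀ]`, so `det B = ±1`. Every entry of `B z` is `0` or `α`,
so `z = B⁻¹ (B z)` is divisible by `α`, and `gcd z = 1` gives `α = ±1`.
-/

open Matrix Filter Topology

theorem Matrix.exists_submatrix_det_ne_zero_of_mulVec_injective {m n K : Type*} [Field K]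
    [Finite m] [Fintype n] [DecidableEq n] {A : Matrix m n K} (hA : Function.Injective A.mulVec) :
    ∃ g : n → m, Function.Injective g ∧ (A.submatrix g id).det ≠ 0 := by
  obtain ⟨κ, a, ha, hspan, hind⟩ := exists_linearIndependent' K A.row
  have : Fintype κ := @Fintype.ofFinite _ hind.finite
  have hcard : Fintype.card κ = Fintype.card n := by
    rw [linearIndependent_iff_card_eq_finrank_span.mp hind, Set.finrank, hspan,
      ← rank_eq_finrank_span_row, rank, LinearMap.finrank_range_of_inj hA,
      Module.finrank_fintype_fun_eq_card]
  let e : n ≃ κ := Fintype.equivOfCardEq hcard.symm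
  refine ⟨a ∘ e, ha.comp e.injective, ?_⟩
  rw [← isUnit_iff_ne_zero, ← isUnit_iff_isUnit_det, ← linearIndependent_rows_iff_isUnit]
  exact hind.comp e e.injective

theorem Matrix.IsTotallyUnimodular.isUnit_det_submatrix {m n ι R : Type*} [CommRing R]
    [Fintype ι] [DecidableEq ι] {A : Matrix m n R} (hA : A.IsTotallyUnimodular) (f : ι → m)
    (g : ι → n) (h : (A.submatrix f g).det ≠ 0) : IsUnit (A.submatrix f g).det := by
  obtain ⟨s, hs⟩ := A.isTotallyUnimodular_iff_fintype.mp hA ι f g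
  rw [← hs] at h ⊢
  cases s <;> simp at h ⊢

theorem Matrix.dvd_of_dvd_mulVec {n R : Type*} [Fintype n] [DecidableEq n] [CommRing R]
    {B : Matrix n n R} (hB : IsUnit B.det) {z : n → R} {α : R} (h : ∀ i, α ∣ (B *ᵥ z) i)
    (j : n) : α ∣ z j := by
  rw [← one_mulVec z, ← nonsing_inv_mul B hB, ← mulVec_mulVec]
  exact Finset.dvd_sum fun k _ => dvd_mul_of_dvd_right (h k) _

theorem Matrix.IsTotallyUnimodular.dvd_of_injective_on_dvd_rows {m n : Type*} [Finite m]
    [Fintype n] [DecidableEq n] {M : Matrix m n ℤ} (hM : M.IsTotallyUnimodular) {z : n → ℤ}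
    {α : ℤ} (hinj : ∀ x : n → ℚ, (∀ p, α ∣ (M *ᵥ z) p → (M.map Int.cast *ᵥ x) p = 0) → x = 0)
    (j : n) : α ∣ z j := by
  let A : Matrix {p // α ∣ (M *ᵥ z) p} n ℚ := (M.map Int.cast).submatrix Subtype.val id
  have hA : Function.Injective A.mulVec := by
    intro x y hxy
    rw [← sub_eq_zero]
    refine hinj _ fun p hp => ?_
    rw [mulVec_sub, Pi.sub_apply, sub_eq_zero]
    exact congrFun hxy ⟨p, hp⟩
  obtain ⟨g, -, hdet⟩ := exists_submatrix_det_ne_zero_of_mulVec_injective hA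
  have hdet' : (M.submatrix (Subtype.val ∘ g) id).det ≠ 0 := by
    rwa [Ne, ← Int.cast_eq_zero (α := ℚ), Int.cast_det]
  exact dvd_of_dvd_mulVec (hM.isUnit_det_submatrix _ _ hdet') (fun i => (g i).2) j

section Cone

variable {m n K : Type*} [Finite m] [Fintype n] [Field K] [LinearOrder K] [IsStrictOrderedRing K]
  [TopologicalSpace K] [OrderTopology K]

theorem eventually_mulVec_add_smul_nonpos {A : Matrix m n K} {z x : n → K} (hz : A *ᵥ z ≤ 0)
    (hx : ∀ i, (A *ᵥ z) i = 0 → (A *ᵥ x) i = 0) :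
    ∀ᶠ ε : K in 𝓝 0, A *ᵥ (z + ε • x) ≤ 0 := by
  simp only [Pi.le_def, eventually_all]
  intro i
  simp only [mulVec_add, mulVec_smul, Pi.add_apply, Pi.smul_apply, smul_eq_mul, Pi.zero_apply]
  rcases (hz i).lt_or_eq with hlt | heq
  · have : Tendsto (fun ε : K => (A *ᵥ z) i + ε * (A *ᵥ x) i) (𝓝 0) (𝓝 ((A *ᵥ z) i)) :=
      (by fun_prop : Continuous fun ε : K => (A *ᵥ z) i + ε * (A *ᵥ x) i).tendsto' 0 _ (by simp)
    exact (this.eventually (eventually_lt_nhds hlt)).mono fun _ => le_of_lt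
  · exact Eventually.of_forall fun ε => by simp [heq, hx i heq]

theorem exists_eq_smul_of_tight {A : Matrix m n K} {z : n → K} (hz : A *ᵥ z ≤ 0)
    (hray : ∀ x y, A *ᵥ x ≤ 0 → A *ᵥ y ≤ 0 → x + y = z → ∃ a : K, x = a • z)
    {x : n → K} (hx : ∀ i, (A *ᵥ z) i = 0 → (A *ᵥ x) i = 0) : ∃ c : K, x = c • z := by
  -- `z ± ε x` lie in the cone for small `ε > 0`, and `z` is the sum of their halves.
  have hev := eventually_mulVec_add_smul_nonpos hz hx
  have hev' : ∀ᶠ ε : K in 𝓝 0, A *ᵥ (z + (-ε) • x) ≤ 0 :=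
    (continuous_neg.tendsto' (0 : K) 0 neg_zero).eventually hev
  obtain ⟨ε, ⟨hplus, hminus⟩, hε⟩ :=
    (((hev.and hev').filter_mono nhdsWithin_le_nhds).and
      (self_mem_nhdsWithin : Set.Ioi (0 : K) ∈ 𝓝[>] 0)).exists
  have half_mem : ∀ v, A *ᵥ v ≤ 0 → A *ᵥ ((2 : K)⁻¹ • v) ≤ 0 := fun v hv => by
    rw [mulVec_smul]
    exact smul_nonpos_of_nonneg_of_nonpos (by positivity) hv
  obtain ⟨a, ha⟩ := hray _ _ (half_mem _ hplus) (half_mem _ hminus) (by module)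
  refine ⟨ε⁻¹ * (2 * a - 1), funext fun j => ?_⟩
  have hj := congrFun ha j
  simp only [Pi.smul_apply, Pi.add_apply, smul_eq_mul] at hj ⊢
  field_simp [(Set.mem_Ioi.mp hε).ne']
  linarith

theorem eq_zero_of_tight_of_dotProduct_eq_zero {A : Matrix m n K} {z : n → K} (hz : A *ᵥ z ≤ 0)
    (hray : ∀ x y, A *ᵥ x ≤ 0 → A *ᵥ y ≤ 0 → x + y = z → ∃ a : K, x = a • z)
    {d : n → K} (hdz : d ⬝ᵥ z ≠ 0) {x : n → K} (hx : ∀ i, (A *ᵥ z) i = 0 → (A *ᵥ x) i = 0)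
    (hdx : d ⬝ᵥ x = 0) : x = 0 := by
  obtain ⟨c, rfl⟩ := exists_eq_smul_of_tight hz hray hx
  rw [dotProduct_smul, smul_eq_mul, mul_eq_zero] at hdx
  simp [hdx.resolve_right hdz]

end Cone

theorem stmt4_general (k n : ℕ) (T : Matrix (Fin k) (Fin n) ℤ)
    (C : Set (Fin n → ℚ))
    (hC : C = {x : Fin n → ℚ | ∀ i : Fin k, (∑ j, (T i j : ℚ) * x j) ≤ 0})
    (z : Fin n → ℤ)
    (hzC : (fun j => (z j : ℚ)) ∈ C)
    (hgcd : Finset.univ.gcd (fun j => (z j).natAbs) = 1)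
    (hray : ∀ x y : Fin n → ℚ, x ∈ C → y ∈ C → x + y = (fun j => (z j : ℚ)) →
      ∃ a : ℚ, 0 ≤ a ∧ x = a • (fun j => (z j : ℚ)))
    (d : Fin n → ℤ) (hd : TUAppendable T d) :
    dotProduct d z ∈ ({-1, 0, 1} : Set ℤ) := by
  set α := d ⬝ᵥ z
  rcases eq_or_ne α 0 with hα | hα
  · simp [hα]
  have hmemC : ∀ x, x ∈ C ↔ T.map Int.cast *ᵥ x ≤ 0 := by
    subst hC
    exact fun x => Iff.rfl
  -- The rows `p` of `[T; dᵀ]` with `α ∣ ([T; dᵀ] z) p` include `dᵀ` and the rows of `T`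
  -- tight at `z`.
  have hdvd : ∀ j, α ∣ z j := by
    refine hd.dvd_of_injective_on_dvd_rows fun x hx => ?_
    refine eq_zero_of_tight_of_dotProduct_eq_zero ((hmemC _).1 hzC)
      (fun u v hu hv huv => (hray u v ((hmemC u).2 hu) ((hmemC v).2 hv) huv).imp fun _ => And.right)
      (d := Int.cast ∘ d) (by simpa [α, dotProduct] using (Int.cast_ne_zero (α := ℚ)).2 hα)
      (fun i hi => hx (Sum.inl i) ?_) (hx (Sum.inr ()) dvd_rfl)
    have htight : ((T *ᵥ z) i : ℚ) = 0 := ((Int.castRingHom ℚ).map_mulVec T z i).trans hi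
    simp [Int.cast_eq_zero.1 htight]
  have hunit : IsUnit α := Int.isUnit_iff_natAbs_eq.2 <| Nat.dvd_one.1 <|
    hgcd ▸ Finset.dvd_gcd fun j _ => Int.natAbs_dvd_natAbs.2 (hdvd j)
  rcases Int.isUnit_iff.1 hunit with h | h <;> simp [h]

/-- If `T` is TU, the cone `C = {x : Tx ≤ 0}` is pointed, and `r` is an
elementary extremal ray of `C` (integral, with coprime coordinates), then `dᵀ r ∈ {-1,0,1}`
for every vector `d ∈ {-1,0,1}ⁿ` that is TU-appendable to `T`. -/
theorem stmt4 (k n : ℕ) (T : Matrix (Fin k) (Fin n) ℤ) (hT : T.IsTotallyUnimodular)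
    (C : Set (Fin n → ℚ))
    (hC : C = {x : Fin n → ℚ | ∀ i : Fin k, (∑ j, (T i j : ℚ) * x j) ≤ 0})
    (hpointed : ∀ x ∈ C, -x ∈ C → x = 0)
    (z : Fin n → ℤ) (hz0 : z ≠ 0)
    (hzC : (fun j => (z j : ℚ)) ∈ C)
    (hgcd : Finset.univ.gcd (fun j => (z j).natAbs) = 1)
    (hray : ∀ x y : Fin n → ℚ, x ∈ C → y ∈ C → x + y = (fun j => (z j : ℚ)) →
      ∃ a : ℚ, 0 ≤ a ∧ x = a • (fun j => (z j : ℚ)))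
    (d : Fin n → ℤ) (hd01 : ∀ j, d j ∈ ({-1, 0, 1} : Set ℤ)) (hd : TUAppendable T d) :
    dotProduct d z ∈ ({-1, 0, 1} : Set ℤ) :=
  stmt4_general k n T C hC z hzC hgcd hray d hd
end

section
/- Let T be a totally unimodular matrix with a 2x2 block structure ((A, a_1), (a_2^T, α)) where α ≠ 0 (so α ∈ {-1,1}). Then the matrix A - α a_1 a_2^T is totally unimodular. -/
/-!
Every square submatrix of `A - α a₁ a₂ᵀ` is a Schur complement: bordering it with the
corresponding entries of `a₁`, `a₂` and with `α` gives a square submatrix `S` of the totally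
unimodular matrix, and `det S = α · det (A - α a₁ a₂ᵀ)[f, g]` because `α⁻¹ = α`. Since `α` and
`det S` are both `0` or `±1`, so is the determinant of the submatrix.
-/

namespace Matrix

lemma fromBlocks_submatrix_sum_map {l m n o l' m' n' o' α : Type*} (A : Matrix n l α)
    (B : Matrix n m α) (C : Matrix o l α) (D : Matrix o m α) (f₁ : n' → n) (f₂ : o' → o)
    (g₁ : l' → l) (g₂ : m' → m) :
    (fromBlocks A B C D).submatrix (Sum.map f₁ f₂) (Sum.map g₁ g₂) =
      fromBlocks (A.submatrix f₁ g₁) (B.submatrix f₁ g₂) (C.submatrix f₂ g₁)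
        (D.submatrix f₂ g₂) := by
  ext (i | i) (j | j) <;> rfl

variable {m n R : Type*} [CommRing R]

lemma IsTotallyUnimodular.det [Fintype m] [DecidableEq m] {A : Matrix m m R}
    (hA : A.IsTotallyUnimodular) : A.det ∈ Set.range SignType.cast := by
  simpa using (isTotallyUnimodular_iff_fintype A).mp hA m id id

lemma mul_self_eq_one_of_mem_range_signType_cast {α : R} (hα : α ∈ Set.range SignType.cast)
    (hα₀ : α ≠ 0) : α * α = 1 := by
  obtain ⟨s, rfl⟩ := hα
  cases s <;> simp_all

lemma det_fromBlocks_scalar₂₂ [Fintype m] [DecidableEq m] (M : Matrix m m R) (b c : m → R)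
    {α : R} (hα : α * α = 1) :
    (fromBlocks M (replicateCol Unit b) (replicateRow Unit c) (of fun _ _ => α)).det =
      α * (M - α • vecMulVec b c).det := by
  let _ : Invertible (of fun (_ : Unit) (_ : Unit) => α) :=
    ⟨of fun _ _ => α, by ext; simp [mul_apply, hα], by ext; simp [mul_apply, hα]⟩
  rw [det_fromBlocks₂₂, det_unique, show ⅟(of fun _ _ => α) = of fun _ _ => α from rfl]
  congr 2
  ext i j
  simp [mul_apply, vecMulVec_apply, mul_assoc, mul_left_comm]

theorem IsTotallyUnimodular.pivot {A : Matrix m n R} {b : m → R} {c : n → R} {α : R}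
    (hT : (fromBlocks A (replicateCol Unit b) (replicateRow Unit c)
      (of fun _ _ => α)).IsTotallyUnimodular) (hα : α ≠ 0) :
    (A - α • vecMulVec b c).IsTotallyUnimodular := by
  have hα_sign : α ∈ Set.range SignType.cast := hT.apply (Sum.inr ()) (Sum.inr ())
  have hα_sq := mul_self_eq_one_of_mem_range_signType_cast hα_sign hα
  rw [isTotallyUnimodular_iff]
  intro k f g
  have hS : (fromBlocks (A.submatrix f g) (replicateCol Unit (b ∘ f)) (replicateRow Unit (c ∘ g))
      (of fun _ _ => α)).det ∈ Set.range SignType.cast := by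
    have h := (hT.submatrix (Sum.map f id) (Sum.map g id)).det
    rwa [fromBlocks_submatrix_sum_map] at h
  rw [det_fromBlocks_scalar₂₂ _ _ _ hα_sq] at hS
  have hdet : ((A - α • vecMulVec b c).submatrix f g).det =
      α * (α * (A.submatrix f g - α • vecMulVec (b ∘ f) (c ∘ g)).det) := by
    rw [← mul_assoc, hα_sq, one_mul]
    rfl
  obtain ⟨s, hs⟩ := hα_sign
  obtain ⟨t, ht⟩ := hS
  exact ⟨s * t, by rw [hdet, SignType.coe_mul, hs, ht]⟩

end Matrix

/-- If the block matrix `((A, a₁), (a₂ᵀ, α))` is totally unimodular and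
`α ≠ 0`, then the pivoted matrix `A - α a₁ a₂ᵀ` is totally unimodular. -/
theorem stmt5 (k n : ℕ) (A : Matrix (Fin k) (Fin n) ℤ)
    (a₁ : Fin k → ℤ) (a₂ : Fin n → ℤ) (α : ℤ) (hα : α ≠ 0)
    (hT : (Matrix.fromBlocks A (Matrix.of fun i (_ : Unit) => a₁ i)
        (Matrix.of fun (_ : Unit) j => a₂ j)
        (Matrix.of fun (_ : Unit) (_ : Unit) => α)).IsTotallyUnimodular) :
    (Matrix.of fun i j => A i j - α * a₁ i * a₂ j).IsTotallyUnimodular := by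
  convert Matrix.IsTotallyUnimodular.pivot hT hα using 1
  ext i j
  simp [Matrix.vecMulVec_apply, mul_assoc]
end

section
/- Let m be a positive integer and R a subset of {0,...,m-1}. Suppose an R-congruency-constrained system Tx ≤ b, γ^T x ∈ R (mod m), x ∈ Z^n with T totally unimodular has a feasible solution y, and let x_0 ∈ Z^n satisfy T x_0 ≤ b. If for every d ∈ Z^n TU-appendable to T one can write y - x_0 = ∑_{i=1}^n λ_i y^i with λ_i ∈ Z_{≥0}, each y^i elementary w.r.t. T, and all partial combinations x_0 + ∑ μ_i y^i (0 ≤ μ_i ≤ λ_i) feasible for Tx ≤ b, then there exists a feasible solution ỹ of the congruency-constrained system with ∑ of the used coefficients at most m - |R|, and hence d^T(ỹ - x_0) ≤ m - |R| for every TU-appendable d. -/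
def ElementaryWrt {k n : ℕ} (T : Matrix (Fin k) (Fin n) ℤ) (x : Fin n → ℤ) : Prop :=
  ∀ d : Fin n → ℤ, TUAppendable T d → dotProduct d x ∈ ({-1, 0, 1} : Set ℤ)

namespace List

theorem take_append_drop_sublist {α : Type*} (l : List α) {a b : ℕ} (hab : a ≤ b) :
    (l.take a ++ l.drop b).Sublist l := by
  conv_rhs => rw [← take_append_drop a l]
  exact (drop_sublist_drop_left l hab).append_left _

variable {G : Type*} [AddMonoid G]

theorem add_sum_take_append_drop_eq {c : G} {l : List G} {a b : ℕ}
    (h : c + (l.take a).sum = c + (l.take b).sum) :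
    c + (l.take a ++ l.drop b).sum = c + l.sum := by
  rw [sum_append, ← add_assoc, h, add_assoc, ← sum_append, take_append_drop]

variable [Fintype G] [DecidableEq G]

theorem length_le_card_sub_card_of_minimal {S : Finset G} {c : G} {l : List G}
    (hl : c + l.sum ∈ S)
    (hmin : ∀ l' : List G, l'.Sublist l → l'.length < l.length → c + l'.sum ∉ S) :
    l.length ≤ Fintype.card G - S.card := by
  have hcut : ∀ a b, a < b → b ≤ l.length →
      c + (l.take a).sum ≠ c + (l.take b).sum := fun a b hab hb heq =>
    hmin _ (take_append_drop_sublist l hab.le)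
      (by simp only [length_append, length_take, length_drop]; omega)
      (by rwa [add_sum_take_append_drop_eq heq])
  rw [← Finset.card_compl, ← Finset.card_range l.length]
  refine Finset.card_le_card_of_injOn (fun s => c + (l.take s).sum) (fun s hs => ?_)
    (fun a ha b hb hab => ?_)
  · simp only [Finset.coe_range, Set.mem_Iio] at hs
    exact Finset.mem_compl.2 (hmin _ (take_sublist s l) (by simpa using hs))
  · simp only [Finset.coe_range, Set.mem_Iio] at ha hb
    by_contra hne
    rcases Nat.lt_or_gt_of_ne hne with h | h
    · exact hcut a b h hb.le hab
    · exact hcut b a h ha.le hab.symm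

theorem exists_sublist_length_le_card_sub_card {S : Finset G} {c : G} {l : List G}
    (hl : c + l.sum ∈ S) :
    ∃ l' : List G, l'.Sublist l ∧ l'.length ≤ Fintype.card G - S.card ∧ c + l'.sum ∈ S := by
  classical
  have hex : ∃ N, ∃ l' : List G, l'.Sublist l ∧ l'.length = N ∧ c + l'.sum ∈ S :=
    ⟨_, l, Sublist.refl l, rfl, hl⟩
  obtain ⟨l', hl'l, hlen, hl'S⟩ := Nat.find_spec hex
  refine ⟨l', hl'l, length_le_card_sub_card_of_minimal hl'S fun l'' hl'' hlt hS => ?_, hl'S⟩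
  exact Nat.find_min hex (hlen ▸ hlt) ⟨l'', hl''.trans hl'l, rfl, hS⟩

end List

theorem Fintype.sum_list_map_count {ι M : Type*} [Fintype ι] [DecidableEq ι] [AddCommMonoid M]
    (l : List ι) (f : ι → M) : (l.map f).sum = ∑ i, l.count i • f i := by
  rw [Finset.sum_list_map_count]
  refine Finset.sum_subset (Finset.subset_univ _) fun i _ hi => ?_
  rw [List.count_eq_zero_of_not_mem (by simpa using hi), zero_smul]

theorem exists_list_count_eq {ι : Type*} [Fintype ι] [DecidableEq ι] (lam : ι → ℕ) :
    ∃ l : List ι, ∀ i, l.count i = lam i :=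
  ⟨(∑ i, lam i • {i} : Multiset ι).toList, fun i => by
    rw [← Multiset.coe_count, Multiset.coe_toList, Multiset.count_sum']
    simp [Multiset.count_singleton]⟩

theorem exists_le_sum_le_card_sub_card {ι G : Type*} [Fintype ι] [AddCommMonoid G] [Fintype G]
    [DecidableEq G] {S : Finset G} {c : G} (g : ι → G) (lam : ι → ℕ)
    (h : c + ∑ i, lam i • g i ∈ S) :
    ∃ μ : ι → ℕ, (∀ i, μ i ≤ lam i) ∧ ∑ i, μ i ≤ Fintype.card G - S.card ∧
      c + ∑ i, μ i • g i ∈ S := by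
  classical
  obtain ⟨l, hl⟩ := exists_list_count_eq lam
  have hsum : ∀ l' : List ι, (l'.map g).sum = ∑ i, l'.count i • g i :=
    (Fintype.sum_list_map_count · g)
  obtain ⟨_, hsub, hlen, hS⟩ := List.exists_sublist_length_le_card_sub_card (l := l.map g)
    (by simpa [hsum, hl] using h)
  obtain ⟨l', hl'l, rfl⟩ := List.sublist_map_iff.1 hsub
  refine ⟨(l'.count ·), fun i => hl i ▸ hl'l.count_le i, ?_, by rwa [← hsum]⟩
  have hcount : l'.length = ∑ i, l'.count i := by
    simpa using Fintype.sum_list_map_count l' fun _ => (1 : ℕ)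
  simpa [hcount] using hlen

theorem ZMod.intCast_mem_image_natCast_iff {m : ℕ} {R : Finset ℕ} {z : ℤ} :
    (z : ZMod m) ∈ R.image (Nat.cast : ℕ → ZMod m) ↔ ∃ ρ ∈ R, z ≡ ρ [ZMOD m] := by
  simp only [Finset.mem_image, ← Int.cast_natCast (R := ZMod m), ZMod.intCast_eq_intCast_iff,
    Int.modEq_comm]

theorem ZMod.card_image_natCast {m : ℕ} {R : Finset ℕ} (hR : ∀ ρ ∈ R, ρ < m) :
    (R.image (Nat.cast : ℕ → ZMod m)).card = R.card :=
  Finset.card_image_of_injOn fun a ha b hb hab => by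
    simpa [ZMod.val_cast_of_lt (hR a ha), ZMod.val_cast_of_lt (hR b hb)] using
      congrArg ZMod.val hab

theorem ElementaryWrt.dotProduct_le_one {k n : ℕ} {T : Matrix (Fin k) (Fin n) ℤ}
    {x d : Fin n → ℤ} (hx : ElementaryWrt T x) (hd : TUAppendable T d) : d ⬝ᵥ x ≤ 1 := by
  have h := hx d hd
  simp only [Set.mem_insert_iff, Set.mem_singleton_iff] at h
  omega

theorem dotProduct_sum_natCast_smul_le {ι n : Type*} [Fintype ι] [Fintype n] (d : n → ℤ)
    (v : ι → n → ℤ) (μ : ι → ℕ) (h : ∀ i, d ⬝ᵥ v i ≤ 1) :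
    d ⬝ᵥ ∑ i, (μ i : ℤ) • v i ≤ ∑ i, (μ i : ℤ) := by
  rw [dotProduct_sum]
  exact Finset.sum_le_sum fun i _ => by
    rw [dotProduct_smul, smul_eq_mul]; exact mul_le_of_le_one_right (Nat.cast_nonneg _) (h i)

theorem stmt10_general (k n : ℕ) (T : Matrix (Fin k) (Fin n) ℤ)
    (b : Fin k → ℤ) (γ : Fin n → ℤ) (m : ℕ) (hm : 0 < m)
    (R : Finset ℕ) (hR : ∀ ρ ∈ R, ρ < m)
    (y x₀ : Fin n → ℤ)
    (hyR : ∃ ρ ∈ R, dotProduct γ y ≡ (ρ : ℤ) [ZMOD (m : ℤ)])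
    (ys : Fin n → (Fin n → ℤ)) (lam : Fin n → ℕ)
    (hdecomp : y - x₀ = ∑ i, (lam i : ℤ) • ys i)
    (helem : ∀ i, ElementaryWrt T (ys i))
    (hfeas : ∀ μ : Fin n → ℕ, (∀ i, μ i ≤ lam i) →
      T.mulVec (x₀ + ∑ i, (μ i : ℤ) • ys i) ≤ b) :
    ∃ μ : Fin n → ℕ, (∀ i, μ i ≤ lam i) ∧ (∑ i, μ i) ≤ m - R.card ∧
      T.mulVec (x₀ + ∑ i, (μ i : ℤ) • ys i) ≤ b ∧
      (∃ ρ ∈ R, dotProduct γ (x₀ + ∑ i, (μ i : ℤ) • ys i) ≡ (ρ : ℤ) [ZMOD (m : ℤ)]) ∧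
      (∀ d : Fin n → ℤ, TUAppendable T d →
        dotProduct d ((x₀ + ∑ i, (μ i : ℤ) • ys i) - x₀) ≤ (m : ℤ) - R.card) := by
  have : NeZero m := ⟨hm.ne'⟩
  set S := R.image (Nat.cast : ℕ → ZMod m)
  have hS : S.card = R.card := ZMod.card_image_natCast hR
  let φ : (Fin n → ℤ) →+ ZMod m :=
    (Int.castAddHom (ZMod m)).comp (dotProductBilin ℤ ℤ γ).toAddMonoidHom
  have hφ : ∀ μ : Fin n → ℕ, φ (x₀ + ∑ i, (μ i : ℤ) • ys i) = φ x₀ + ∑ i, μ i • φ (ys i) := by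
    intro μ; simp only [map_add, map_sum, natCast_zsmul, map_nsmul]
  have hyS : φ x₀ + ∑ i, lam i • φ (ys i) ∈ S := by
    rw [← hφ, ← hdecomp, add_sub_cancel]
    exact ZMod.intCast_mem_image_natCast_iff.2 hyR
  obtain ⟨μ, hμ, hμsum, hμS⟩ := exists_le_sum_le_card_sub_card _ lam hyS
  rw [ZMod.card, hS] at hμsum
  refine ⟨μ, hμ, hμsum, hfeas μ hμ,
    ZMod.intCast_mem_image_natCast_iff.1 (by rwa [← hφ μ] at hμS), fun d hd => ?_⟩
  have hRm : R.card ≤ m := hS ▸ S.card_le_univ.trans_eq (ZMod.card m)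
  calc d ⬝ᵥ (x₀ + ∑ i, (μ i : ℤ) • ys i - x₀) = d ⬝ᵥ ∑ i, (μ i : ℤ) • ys i := by
        rw [add_sub_cancel_left]
    _ ≤ ∑ i, (μ i : ℤ) :=
        dotProduct_sum_natCast_smul_le d ys μ fun i => (helem i).dotProduct_le_one hd
    _ ≤ m - R.card := by push_cast [← Nat.cast_sum]; omega

/-- Given a feasible solution `y` of the `R`-congruency-constrained TU system
and a solution `x₀` of its relaxation, together with a decomposition
`y - x₀ = ∑ λᵢ yⁱ` into elementary vectors whose partial combinations remain feasible for
the relaxation, there is a choice of coefficients `μᵢ ≤ λᵢ` with `∑ μᵢ ≤ m - |R|` so that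
`ỹ = x₀ + ∑ μᵢ yⁱ` is feasible for the congruency-constrained system; in particular
`dᵀ(ỹ - x₀) ≤ m - |R|` for every TU-appendable `d`. -/
theorem stmt10 (k n : ℕ) (T : Matrix (Fin k) (Fin n) ℤ) (hT : T.IsTotallyUnimodular)
    (b : Fin k → ℤ) (γ : Fin n → ℤ) (m : ℕ) (hm : 0 < m)
    (R : Finset ℕ) (hR : ∀ ρ ∈ R, ρ < m)
    (y x₀ : Fin n → ℤ)
    (hy : T.mulVec y ≤ b)
    (hyR : ∃ ρ ∈ R, dotProduct γ y ≡ (ρ : ℤ) [ZMOD (m : ℤ)])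
    (hx₀ : T.mulVec x₀ ≤ b)
    (ys : Fin n → (Fin n → ℤ)) (lam : Fin n → ℕ)
    (hdecomp : y - x₀ = ∑ i, (lam i : ℤ) • ys i)
    (helem : ∀ i, ElementaryWrt T (ys i))
    (hfeas : ∀ μ : Fin n → ℕ, (∀ i, μ i ≤ lam i) →
      T.mulVec (x₀ + ∑ i, (μ i : ℤ) • ys i) ≤ b) :
    ∃ μ : Fin n → ℕ, (∀ i, μ i ≤ lam i) ∧ (∑ i, μ i) ≤ m - R.card ∧
      T.mulVec (x₀ + ∑ i, (μ i : ℤ) • ys i) ≤ b ∧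
      (∃ ρ ∈ R, dotProduct γ (x₀ + ∑ i, (μ i : ℤ) • ys i) ≡ (ρ : ℤ) [ZMOD (m : ℤ)]) ∧
      (∀ d : Fin n → ℤ, TUAppendable T d →
        dotProduct d ((x₀ + ∑ i, (μ i : ℤ) • ys i) - x₀) ≤ (m : ℤ) - R.card) :=
  stmt10_general k n T b γ m hm R hR y x₀ hyR ys lam hdecomp helem hfeas
end

section
/- Let A be a k_A×n_A matrix and B a k_B×n_B matrix. If the matrices ((A, e, e), (h^T, 0, 1)) and ((0, 1, f^T), (g, g, B)) are totally unimodular, then their 3-sum ((A, e f^T), (g h^T, B)) is totally unimodular. -/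
/-!
Take a square submatrix of the 3-sum `M` using `k₁` rows and `l₁` columns of `A` (and `k₂`, `l₂`
of `B`); up to transposition `l₁ ≤ k₁`. The factorization
`M = [A e 0; 0 0 1] * [1 0; 0 fᵀ; ghᵀ B]` passes through `l₁ + 1 + k₂` indices, so the minor
vanishes if `k₁ ≥ l₁ + 2` and is `± det [A e] * det [fᵀ; B]` if `k₁ = l₁ + 1`. If `k₁ = l₁` then
`det M = det A * det B - det [A e; hᵀ 0] * det [B g; fᵀ 0]`. Total unimodularity of the two
given matrices puts `a = det A`, `α = det [A e; hᵀ 0]` and `a + α = det [A e; hᵀ 1]` in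
`{0, ±1}`, and likewise `b`, `β`, `b + β` on the `B` side; these constraints force
`a * b - α * β ∈ {0, ±1}`.
-/

lemma mul_mem_range_signType_cast {R : Type*} [MulZeroOneClass R] [HasDistribNeg R] {x y : R}
    (hx : x ∈ Set.range SignType.cast) (hy : y ∈ Set.range SignType.cast) :
    x * y ∈ Set.range SignType.cast := by
  obtain ⟨a, rfl⟩ := hx
  obtain ⟨b, rfl⟩ := hy
  exact ⟨a * b, SignType.coe_mul a b⟩

lemma Int.mem_range_signType_cast_iff {x : ℤ} : x ∈ Set.range SignType.cast ↔ |x| ≤ 1 := by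
  refine ⟨?_, fun hx => ?_⟩
  · rintro ⟨s, rfl⟩
    cases s <;> simp
  · obtain rfl | rfl | rfl : x = 0 ∨ x = 1 ∨ x = -1 := by rw [abs_le] at hx; omega
    exacts [⟨0, rfl⟩, ⟨1, rfl⟩, ⟨-1, rfl⟩]

lemma Int.mul_sub_mul_mem_range_signType_cast {a b α β : ℤ}
    (ha : a ∈ Set.range SignType.cast) (hb : b ∈ Set.range SignType.cast)
    (hα : α ∈ Set.range SignType.cast) (hβ : β ∈ Set.range SignType.cast)
    (haα : a + α ∈ Set.range SignType.cast) (hbβ : b + β ∈ Set.range SignType.cast) :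
    a * b - α * β ∈ Set.range SignType.cast := by
  simp only [Int.mem_range_signType_cast_iff, abs_le] at *
  obtain rfl | rfl | rfl : a = -1 ∨ a = 0 ∨ a = 1 := by omega
  all_goals obtain rfl | rfl | rfl : b = -1 ∨ b = 0 ∨ b = 1 := by omega
  all_goals obtain rfl | rfl | rfl : α = -1 ∨ α = 0 ∨ α = 1 := by omega
  all_goals omega

lemma Sum.map_getLeft_getRight_comp_sumCompl_symm {ι α β : Type*} (r : ι → α ⊕ β) :
    Sum.map (fun i : {i // (r i).isLeft} => (r i).getLeft i.2)
        (fun i : {i // ¬(r i).isLeft} => (r i).getRight (Sum.not_isLeft.mp i.2)) ∘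
      (Equiv.sumCompl fun i => (r i).isLeft).symm = r := by
  funext i
  by_cases hi : (r i).isLeft
  · rw [Function.comp_apply, Equiv.sumCompl_symm_apply_of_pos (p := fun i => (r i).isLeft) hi,
      Sum.map_inl, Sum.inl_getLeft]
  · rw [Function.comp_apply, Equiv.sumCompl_symm_apply_of_neg (p := fun i => (r i).isLeft) hi,
      Sum.map_inr, Sum.inr_getRight]

namespace Matrix

variable {m₁ m₂ n₁ n₂ ι R : Type*}

def threeSum [Mul R] (A : Matrix m₁ n₁ R) (B : Matrix m₂ n₂ R) (e : m₁ → R) (f : n₂ → R)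
    (g : m₂ → R) (h : n₁ → R) : Matrix (m₁ ⊕ m₂) (n₁ ⊕ n₂) R :=
  fromBlocks A (vecMulVec e f) (vecMulVec g h) B

def bordered (A : Matrix m₁ n₁ R) (e : m₁ → R) (h : n₁ → R) (c : R) :
    Matrix (m₁ ⊕ Unit) (n₁ ⊕ Unit) R :=
  fromBlocks A (replicateCol Unit e) (replicateRow Unit h) (of fun _ _ => c)

lemma threeSum_submatrix [Mul R] {m₁' m₂' n₁' n₂' : Type*} (A : Matrix m₁ n₁ R)
    (B : Matrix m₂ n₂ R) (e : m₁ → R) (f : n₂ → R) (g : m₂ → R) (h : n₁ → R)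
    (r₁ : m₁' → m₁) (r₂ : m₂' → m₂) (c₁ : n₁' → n₁) (c₂ : n₂' → n₂) :
    (threeSum A B e f g h).submatrix (Sum.map r₁ r₂) (Sum.map c₁ c₂) =
      threeSum (A.submatrix r₁ c₁) (B.submatrix r₂ c₂) (e ∘ r₁) (f ∘ c₂) (g ∘ r₂) (h ∘ c₁) := by
  ext (i | i) (j | j) <;> rfl

lemma threeSum_transpose [CommMagma R] (A : Matrix m₁ n₁ R) (B : Matrix m₂ n₂ R)
    (e : m₁ → R) (f : n₂ → R) (g : m₂ → R) (h : n₁ → R) :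
    (threeSum A B e f g h)ᵀ = threeSum Aᵀ Bᵀ h g f e := by
  ext (i | i) (j | j) <;> simp [threeSum, vecMulVec, mul_comm]

lemma bordered_submatrix {m₁' n₁' : Type*} (A : Matrix m₁ n₁ R) (e : m₁ → R) (h : n₁ → R)
    (c : R) (r : m₁' → m₁) (s : n₁' → n₁) :
    (bordered A e h c).submatrix (Sum.map r id) (Sum.map s id) =
      bordered (A.submatrix r s) (e ∘ r) (h ∘ s) c := by
  ext (i | i) (j | j) <;> rfl

lemma bordered_transpose (A : Matrix m₁ n₁ R) (e : m₁ → R) (h : n₁ → R) (c : R) :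
    (bordered A e h c)ᵀ = bordered Aᵀ h e c := by
  ext (i | i) (j | j) <;> rfl

section CommRing

variable [CommRing R]

lemma threeSum_eq_mul [Fintype n₁] [Fintype m₂] [DecidableEq n₁] [DecidableEq m₂]
    (A : Matrix m₁ n₁ R) (B : Matrix m₂ n₂ R)
    (e : m₁ → R) (f : n₂ → R) (g : m₂ → R) (h : n₁ → R) :
    threeSum A B e f g h =
      (fromBlocks (fromCols A (replicateCol Unit e)) 0 0 1 :
          Matrix (m₁ ⊕ m₂) ((n₁ ⊕ Unit) ⊕ m₂) R) *
        (fromBlocks (fromRows 1 0) (fromRows 0 (replicateRow Unit f)) (vecMulVec g h) B :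
          Matrix ((n₁ ⊕ Unit) ⊕ m₂) (n₁ ⊕ n₂) R) := by
  simp [threeSum, fromBlocks_multiply, fromCols_mul_fromRows, vecMulVec_eq Unit]

lemma det_mul_eq_zero_of_card_lt {μ : Type*} [Fintype ι] [DecidableEq ι] [Fintype μ]
    [DecidableEq μ] (X : Matrix ι μ R) (Y : Matrix μ ι R) (h : Fintype.card μ < Fintype.card ι) :
    (X * Y).det = 0 := by
  let π : ι ≃ μ ⊕ Fin (Fintype.card ι - Fintype.card μ) :=
    Fintype.equivOfCardEq (by simp only [Fintype.card_sum, Fintype.card_fin]; omega)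
  have hXY : X * Y = (fromCols X 0).submatrix id π * (fromRows Y 0).submatrix π id := by
    rw [submatrix_mul_equiv _ _ _ π, fromCols_mul_fromRows]
    simp
  rw [hXY, det_mul]
  exact mul_eq_zero_of_right _ (det_eq_zero_of_row_eq_zero (π.symm (Sum.inr ⟨0, by omega⟩))
    (by simp))

lemma det_bordered [Fintype m₁] [DecidableEq m₁] (A : Matrix m₁ m₁ R) (e h : m₁ → R) (c : R) :
    (bordered A e h c).det = c * A.det + (bordered A e h 0).det := by
  have hsplit : bordered A e h c = updateRow (bordered A e h 0) (Sum.inr ())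
      (Sum.elim (0 : m₁ → R) (fun _ => c) + Sum.elim h (0 : Unit → R)) := by
    ext i (j | j) <;> rcases i with i | i <;> simp [bordered]
  have hcorner : updateRow (bordered A e h 0) (Sum.inr ()) (Sum.elim (0 : m₁ → R) (fun _ => c)) =
      fromBlocks A (replicateCol Unit e) 0 (of fun _ _ => c) := by
    ext i (j | j) <;> rcases i with i | i <;> simp [bordered]
  have hself : updateRow (bordered A e h 0) (Sum.inr ()) (Sum.elim h (0 : Unit → R)) =
      bordered A e h 0 := by
    ext i (j | j) <;> rcases i with i | i <;> simp [bordered]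
  rw [hsplit, det_updateRow_add, hcorner, hself, det_fromBlocks_zero₂₁,
    det_unique (of fun _ _ => c : Matrix Unit Unit R), of_apply, mul_comm]

lemma det_bordered_neg [Fintype m₁] [DecidableEq m₁] (A : Matrix m₁ m₁ R) (e h : m₁ → R)
    (c : R) : (bordered A e (-h) (-c)).det = -(bordered A e h c).det := by
  have hrow : bordered A e (-h) (-c) =
      updateRow (bordered A e h c) (Sum.inr ()) ((-1 : R) • bordered A e h c (Sum.inr ())) := by
    ext i (j | j) <;> rcases i with i | i <;> simp [bordered]
  rw [hrow, det_updateRow_smul, updateRow_eq_self, neg_one_mul]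

lemma det_threeSum_submatrix_sumAssoc [Fintype n₁] [DecidableEq n₁] [Fintype m₂]
    [DecidableEq m₂] (A : Matrix (n₁ ⊕ Unit) n₁ R) (B : Matrix m₂ (Unit ⊕ m₂) R)
    (e : n₁ ⊕ Unit → R) (f : Unit ⊕ m₂ → R) (g : m₂ → R) (h : n₁ → R) :
    ((threeSum A B e f g h).submatrix (Equiv.sumAssoc n₁ Unit m₂).symm id).det =
      (fromCols A (replicateCol Unit e)).det * (fromRows (replicateRow Unit f) B).det := by
  set ρ := (Equiv.sumAssoc n₁ Unit m₂).symm
  rw [threeSum_eq_mul, ← submatrix_mul_equiv _ _ ρ ρ id, det_mul, det_submatrix_equiv_self,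
    det_fromBlocks_zero₂₁, det_one, mul_one]
  have hY : (fromBlocks (fromRows 1 0) (fromRows 0 (replicateRow Unit f)) (vecMulVec g h) B :
      Matrix ((n₁ ⊕ Unit) ⊕ m₂) (n₁ ⊕ Unit ⊕ m₂) R).submatrix ρ id =
      fromBlocks 1 0 (fromRows 0 (vecMulVec g h)) (fromRows (replicateRow Unit f) B) := by
    ext (i | i | i) (j | j | j) <;> simp [ρ, one_apply]
  rw [hY, det_fromBlocks_zero₁₂, det_one, one_mul]

/-- The 3-sum is the Schur complement of the corner `1` in `bordered S u v 1`; splitting that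
corner as `1 + 0`, the second summand is a 3-sum whose first block has one more row than
columns, which `det_threeSum_submatrix_sumAssoc` evaluates. -/
lemma det_threeSum [Fintype m₁] [DecidableEq m₁] [Fintype m₂] [DecidableEq m₂]
    (A : Matrix m₁ m₁ R) (B : Matrix m₂ m₂ R) (e h : m₁ → R) (f g : m₂ → R) :
    (threeSum A B e f g h).det =
      A.det * B.det - (bordered A e h 0).det * (bordered B g f 0).det := by
  set S := threeSum A B e f 0 h
  set u : m₁ ⊕ m₂ → R := Sum.elim 0 g
  set v : m₁ ⊕ m₂ → R := Sum.elim (-h) 0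
  have hschur : (threeSum A B e f g h).det = (bordered S u v 1).det := by
    have hone : (of fun _ _ => 1 : Matrix Unit Unit R) = 1 := by ext; simp
    rw [bordered, hone, det_fromBlocks_one₂₂, ← vecMulVec_eq Unit]
    congr 1
    ext (i | i) (j | j) <;> simp [S, u, v, threeSum, vecMulVec]
  have hS : S.det = A.det * B.det := by
    rw [show S = fromBlocks A (vecMulVec e f) 0 B by simp [S, threeSum], det_fromBlocks_zero₂₁]
  set ρ := (Equiv.sumAssoc m₁ Unit m₂).symm
  set π : (m₁ ⊕ m₂) ⊕ Unit ≃ m₁ ⊕ Unit ⊕ m₂ :=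
    (Equiv.sumAssoc m₁ m₂ Unit).trans ((Equiv.refl m₁).sumCongr (Equiv.sumComm m₂ Unit))
  have hcorner : bordered S u v 0 =
      ((threeSum (fromRows A (replicateRow Unit (-h))) (fromCols (replicateCol Unit g) B)
        (Sum.elim e 0) (Sum.elim 0 f) 0 0).submatrix ρ id).submatrix π π := by
    ext ((i | i) | i) ((j | j) | j) <;> simp [S, u, v, ρ, π, bordered, threeSum, vecMulVec]
  have hA : (fromCols (fromRows A (replicateRow Unit (-h))) (replicateCol Unit (Sum.elim e 0))).det
      = -(bordered A e h 0).det := by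
    rw [← det_bordered_neg, neg_zero]
    congr 1
    ext (i | i) (j | j) <;> simp [bordered]
  have hB : (fromRows (replicateRow Unit (Sum.elim 0 f)) (fromCols (replicateCol Unit g) B)).det
      = (bordered B g f 0).det := by
    rw [← det_submatrix_equiv_self (Equiv.sumComm Unit m₂)]
    congr 1
    ext (i | i) (j | j) <;> simp [bordered]
  rw [hschur, det_bordered, one_mul, hS, hcorner, det_submatrix_equiv_self,
    det_threeSum_submatrix_sumAssoc, hA, hB]
  ring

lemma det_threeSum_submatrix_eq_zero [Fintype m₁] [Fintype m₂] [DecidableEq m₂] [Fintype n₁]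
    [DecidableEq n₁] [Fintype ι] [DecidableEq ι] (A : Matrix m₁ n₁ R) (B : Matrix m₂ n₂ R)
    (e : m₁ → R) (f : n₂ → R) (g : m₂ → R) (h : n₁ → R) (σ : ι ≃ m₁ ⊕ m₂) (τ : ι → n₁ ⊕ n₂)
    (hcard : Fintype.card n₁ + 1 < Fintype.card m₁) :
    ((threeSum A B e f g h).submatrix σ τ).det = 0 := by
  rw [threeSum_eq_mul, ← submatrix_mul_equiv _ _ σ (Equiv.refl _) τ]
  refine det_mul_eq_zero_of_card_lt _ _ ?_
  simp only [Fintype.card_congr σ, Fintype.card_sum, Fintype.card_unit]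
  omega

lemma IsTotallyUnimodular.det_submatrix_mem {A : Matrix m₁ n₁ R} (hA : A.IsTotallyUnimodular)
    [Fintype ι] [DecidableEq ι] (r : ι → m₁) (c : ι → n₁) :
    (A.submatrix r c).det ∈ Set.range SignType.cast :=
  (isTotallyUnimodular_iff_fintype A).mp hA ι r c

lemma IsTotallyUnimodular.det_mem [Fintype m₁] [DecidableEq m₁] {A : Matrix m₁ m₁ R}
    (hA : A.IsTotallyUnimodular) : A.det ∈ Set.range SignType.cast := by
  simpa using hA.det_submatrix_mem id id

lemma IsTotallyUnimodular.bordered_submatrix {m₁' n₁' : Type*} {A : Matrix m₁ n₁ R}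
    {e : m₁ → R} {h : n₁ → R} {c : R} (hA : (bordered A e h c).IsTotallyUnimodular)
    (r : m₁' → m₁) (s : n₁' → n₁) :
    (bordered (A.submatrix r s) (e ∘ r) (h ∘ s) c).IsTotallyUnimodular :=
  Matrix.bordered_submatrix A e h c r s ▸ hA.submatrix _ _

end CommRing

section Int

lemma det_submatrix_equiv_mem_range_iff {κ : Type*} [Fintype ι] [DecidableEq ι] [Fintype κ]
    [DecidableEq κ] (N : Matrix κ κ ℤ) (σ τ : ι ≃ κ) :
    (N.submatrix σ τ).det ∈ Set.range SignType.cast ↔ N.det ∈ Set.range SignType.cast := by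
  simp only [Int.mem_range_signType_cast_iff, abs_det_submatrix_equiv_equiv]

lemma det_threeSum_mem_range [Fintype m₁] [DecidableEq m₁] [Fintype m₂] [DecidableEq m₂]
    {A : Matrix m₁ m₁ ℤ} {B : Matrix m₂ m₂ ℤ} {e h : m₁ → ℤ} {f g : m₂ → ℤ}
    (hA₀ : (bordered A e h 0).IsTotallyUnimodular) (hA₁ : (bordered A e h 1).IsTotallyUnimodular)
    (hB₀ : (bordered B g f 0).IsTotallyUnimodular) (hB₁ : (bordered B g f 1).IsTotallyUnimodular) :
    (threeSum A B e f g h).det ∈ Set.range SignType.cast := by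
  have hA : A.det ∈ Set.range SignType.cast := hA₀.det_submatrix_mem Sum.inl Sum.inl
  have hB : B.det ∈ Set.range SignType.cast := hB₀.det_submatrix_mem Sum.inl Sum.inl
  have hAα := hA₁.det_mem
  have hBβ := hB₁.det_mem
  rw [det_bordered, one_mul] at hAα hBβ
  rw [det_threeSum]
  exact Int.mul_sub_mul_mem_range_signType_cast hA hB hA₀.det_mem hB₀.det_mem hAα hBβ

variable {A : Matrix m₁ n₁ ℤ} {B : Matrix m₂ n₂ ℤ} {e : m₁ → ℤ} {f : n₂ → ℤ} {g : m₂ → ℤ}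
  {h : n₁ → ℤ}

lemma det_threeSum_submatrix_mem_of_card_eq_add_one [Fintype m₁] [Fintype m₂] [Fintype n₁]
    [Fintype n₂] [Fintype ι] [DecidableEq ι]
    (hAe : (fromCols A (replicateCol Unit e)).IsTotallyUnimodular)
    (hfB : (fromRows (replicateRow Unit f) B).IsTotallyUnimodular)
    (σ : ι ≃ m₁ ⊕ m₂) (τ : ι ≃ n₁ ⊕ n₂) (hcard : Fintype.card m₁ = Fintype.card n₁ + 1) :
    ((threeSum A B e f g h).submatrix σ τ).det ∈ Set.range SignType.cast := by
  classical
  have hcard₂ : Fintype.card n₂ = 1 + Fintype.card m₂ := by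
    have := (Fintype.card_congr σ).symm.trans (Fintype.card_congr τ)
    simp only [Fintype.card_sum] at this
    omega
  let φ : n₁ ⊕ Unit ≃ m₁ := Fintype.equivOfCardEq (by simp [hcard])
  let ψ : Unit ⊕ m₂ ≃ n₂ := Fintype.equivOfCardEq (by simp [hcard₂])
  let ρ := (Equiv.sumAssoc n₁ Unit m₂).symm
  have hN : (threeSum A B e f g h).submatrix σ τ =
      ((threeSum (A.submatrix φ id) (B.submatrix id ψ) (e ∘ φ) (f ∘ ψ) g h).submatrix ρ
        id).submatrix ((σ.trans (φ.symm.sumCongr (Equiv.refl m₂))).trans ρ.symm)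
        (τ.trans ((Equiv.refl n₁).sumCongr ψ.symm)) := by
    ext i j
    simp only [submatrix_apply, Equiv.trans_apply, Equiv.apply_symm_apply, id]
    rcases σ i with i | i <;> rcases τ j with j | j <;> simp [threeSum, vecMulVec]
  have hfB' : fromRows (replicateRow Unit (f ∘ ψ)) (B.submatrix id ψ) =
      (fromRows (replicateRow Unit f) B).submatrix id ψ := by
    ext (i | i) j <;> rfl
  rw [hN, det_submatrix_equiv_mem_range_iff, det_threeSum_submatrix_sumAssoc, hfB']
  exact mul_mem_range_signType_cast (hAe.det_submatrix_mem φ id) (hfB.det_submatrix_mem id ψ)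

lemma det_threeSum_submatrix_mem_of_card_le [Fintype m₁] [Fintype m₂] [Fintype n₁] [Fintype n₂]
    [Fintype ι] [DecidableEq ι]
    (hA₀ : (bordered A e h 0).IsTotallyUnimodular) (hA₁ : (bordered A e h 1).IsTotallyUnimodular)
    (hB₀ : (bordered B g f 0).IsTotallyUnimodular) (hB₁ : (bordered B g f 1).IsTotallyUnimodular)
    (σ : ι ≃ m₁ ⊕ m₂) (τ : ι ≃ n₁ ⊕ n₂) (hcard : Fintype.card n₁ ≤ Fintype.card m₁) :
    ((threeSum A B e f g h).submatrix σ τ).det ∈ Set.range SignType.cast := by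
  classical
  have hcard' : Fintype.card n₁ + Fintype.card n₂ = Fintype.card m₁ + Fintype.card m₂ := by
    simpa only [Fintype.card_sum] using (Fintype.card_congr τ).symm.trans (Fintype.card_congr σ)
  obtain hbal | hone | hbig : Fintype.card m₁ = Fintype.card n₁ ∨
      Fintype.card m₁ = Fintype.card n₁ + 1 ∨ Fintype.card n₁ + 1 < Fintype.card m₁ := by omega
  · let φ : n₁ ≃ m₁ := Fintype.equivOfCardEq hbal.symm
    let ψ : n₂ ≃ m₂ := Fintype.equivOfCardEq (by omega)
    have hN : (threeSum A B e f g h).submatrix σ τ =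
        (threeSum (A.submatrix id φ.symm) (B.submatrix id ψ.symm) e (f ∘ ψ.symm) g
          (h ∘ φ.symm)).submatrix σ (τ.trans (φ.sumCongr ψ)) := by
      ext i j
      simp only [submatrix_apply, Equiv.trans_apply]
      rcases σ i with i | i <;> rcases τ j with j | j <;> simp [threeSum, vecMulVec]
    rw [hN, det_submatrix_equiv_mem_range_iff]
    exact det_threeSum_mem_range (hA₀.bordered_submatrix id φ.symm)
      (hA₁.bordered_submatrix id φ.symm) (hB₀.bordered_submatrix id ψ.symm)
      (hB₁.bordered_submatrix id ψ.symm)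
  · have hfB : (fromRows (replicateRow Unit f) B).IsTotallyUnimodular := by
      convert hB₀.submatrix Sum.swap Sum.inl using 1
      ext (i | i) j <;> rfl
    exact det_threeSum_submatrix_mem_of_card_eq_add_one (hA₀.submatrix Sum.inl id) hfB σ τ hone
  · rw [det_threeSum_submatrix_eq_zero A B e f g h σ τ hbig]
    exact ⟨0, rfl⟩

lemma det_threeSum_submatrix_mem [Fintype m₁] [Fintype m₂] [Fintype n₁] [Fintype n₂]
    [Fintype ι] [DecidableEq ι]
    (hA₀ : (bordered A e h 0).IsTotallyUnimodular) (hA₁ : (bordered A e h 1).IsTotallyUnimodular)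
    (hB₀ : (bordered B g f 0).IsTotallyUnimodular) (hB₁ : (bordered B g f 1).IsTotallyUnimodular)
    (σ : ι ≃ m₁ ⊕ m₂) (τ : ι ≃ n₁ ⊕ n₂) :
    ((threeSum A B e f g h).submatrix σ τ).det ∈ Set.range SignType.cast := by
  rcases le_total (Fintype.card n₁) (Fintype.card m₁) with hcard | hcard
  · exact det_threeSum_submatrix_mem_of_card_le hA₀ hA₁ hB₀ hB₁ σ τ hcard
  · rw [← det_transpose, transpose_submatrix, threeSum_transpose]
    rw [← transpose_isTotallyUnimodular_iff, bordered_transpose] at hA₀ hA₁ hB₀ hB₁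
    exact det_threeSum_submatrix_mem_of_card_le hA₀ hA₁ hB₀ hB₁ τ σ hcard

theorem IsTotallyUnimodular.threeSum
    (hA₀ : (bordered A e h 0).IsTotallyUnimodular) (hA₁ : (bordered A e h 1).IsTotallyUnimodular)
    (hB₀ : (bordered B g f 0).IsTotallyUnimodular) (hB₁ : (bordered B g f 1).IsTotallyUnimodular) :
    (threeSum A B e f g h).IsTotallyUnimodular := by
  classical
  rw [isTotallyUnimodular_iff]
  intro k r c
  rw [← Sum.map_getLeft_getRight_comp_sumCompl_symm r,
    ← Sum.map_getLeft_getRight_comp_sumCompl_symm c, ← submatrix_submatrix, threeSum_submatrix]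
  exact det_threeSum_submatrix_mem (hA₀.bordered_submatrix _ _) (hA₁.bordered_submatrix _ _)
    (hB₀.bordered_submatrix _ _) (hB₁.bordered_submatrix _ _) _ _

end Int

end Matrix

/-- The 3-sum `((A, efᵀ), (ghᵀ, B))` of the totally unimodular matrices
`((A, e, e), (hᵀ, 0, 1))` and `((0, 1, fᵀ), (g, g, B))` is totally unimodular. -/
theorem stmt14 (kA nA kB nB : ℕ)
    (A : Matrix (Fin kA) (Fin nA) ℤ) (B : Matrix (Fin kB) (Fin nB) ℤ)
    (e : Fin kA → ℤ) (f : Fin nB → ℤ) (g : Fin kB → ℤ) (h : Fin nA → ℤ)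
    (h₁ : (Matrix.of fun (i : Fin kA ⊕ Unit) (j : Fin nA ⊕ Fin 2) =>
      match i, j with
      | Sum.inl i, Sum.inl j => A i j
      | Sum.inl i, Sum.inr _ => e i
      | Sum.inr _, Sum.inl j => h j
      | Sum.inr _, Sum.inr c => (c.val : ℤ)).IsTotallyUnimodular)
    (h₂ : (Matrix.of fun (i : Unit ⊕ Fin kB) (j : Fin 2 ⊕ Fin nB) =>
      match i, j with
      | Sum.inl _, Sum.inl c => (c.val : ℤ)
      | Sum.inl _, Sum.inr j => f j
      | Sum.inr i, Sum.inl _ => g i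
      | Sum.inr i, Sum.inr j => B i j).IsTotallyUnimodular) :
    (Matrix.fromBlocks A (Matrix.of fun i j => e i * f j)
      (Matrix.of fun i j => g i * h j) B).IsTotallyUnimodular := by
  have hA (c : Fin 2) : (Matrix.bordered A e h (c.val : ℤ)).IsTotallyUnimodular := by
    convert h₁.submatrix id (Sum.map id fun _ => c) using 1
    ext (i | i) (j | j) <;> rfl
  have hB (c : Fin 2) : (Matrix.bordered B g f (c.val : ℤ)).IsTotallyUnimodular := by
    convert h₂.submatrix Sum.swap (Sum.elim Sum.inr fun _ => Sum.inl c) using 1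
    ext (i | i) (j | j) <;> rfl
  exact Matrix.IsTotallyUnimodular.threeSum (by simpa using hA 0) (by simpa using hA 1)
    (by simpa using hB 0) (by simpa using hB 1)
end

section
/- Suppose S_1, ..., S_ℓ are finite subsets of a vertex set V of a directed graph, each with no incoming arcs (δ^-(S_i) = ∅ for all i). Then there exist sets T_1 ⊇ T_2 ⊇ ... ⊇ T_ℓ, each with no incoming arcs, such that ∑_{i=1}^ℓ χ^{δ^+(S_i)} = ∑_{i=1}^ℓ χ^{δ^+(T_i)}, and moreover |{i : v ∈ S_i}| = |{i : v ∈ T_i}| for every vertex v. -/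
lemma card_filter_ico (ℓ a b : ℕ) (hb : b ≤ ℓ) :
    (Finset.univ.filter fun i : Fin ℓ => a ≤ i.val ∧ i.val < b).card = b - a := by
  rw [← Nat.card_Ico a b]
  apply Finset.card_bij (fun i _ => i.val)
  · intro i hi
    simp only [Finset.mem_filter] at hi
    simp [Finset.mem_Ico, hi.2.1, hi.2.2]
  · intro i _ j _ h
    exact Fin.val_injective h
  · intro j hj
    rw [Finset.mem_Ico] at hj
    exact ⟨⟨j, lt_of_lt_of_le hj.2 hb⟩, by simp [hj.1, hj.2], rfl⟩

/-- Uncrossing a family of arc-in-free sets into a chain: if each `S i` has no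
incoming arcs, there is a nested family `T₁ ⊇ T₂ ⊇ ... ⊇ T_ℓ` of arc-in-free sets with the
same sum of outgoing-cut indicator vectors, covering every vertex the same number of times. -/
theorem stmt16 (V : Type*) [Fintype V] [DecidableEq V] (E : V → V → Prop) (ℓ : ℕ)
    (S : Fin ℓ → Finset V)
    (hS : ∀ i a b, E a b → b ∈ S i → a ∈ S i) :
    ∃ Tt : Fin ℓ → Finset V,
      (∀ i j : Fin ℓ, i ≤ j → Tt j ⊆ Tt i) ∧
      (∀ i a b, E a b → b ∈ Tt i → a ∈ Tt i) ∧
      (∀ a b, E a b →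
        (Finset.univ.filter fun i => a ∈ S i ∧ b ∉ S i).card =
          (Finset.univ.filter fun i => a ∈ Tt i ∧ b ∉ Tt i).card) ∧
      (∀ v : V, (Finset.univ.filter fun i => v ∈ S i).card =
          (Finset.univ.filter fun i => v ∈ Tt i).card) := by
  classical
  set c : V → ℕ := fun v => (Finset.univ.filter fun i => v ∈ S i).card with hc
  have hcle : ∀ v, c v ≤ ℓ := by
    intro v
    calc c v ≤ Finset.univ.card := Finset.card_filter_le _ _
    _ = ℓ := by simp
  have hmono : ∀ a b, E a b → c b ≤ c a := by
    intro a b hab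
    apply Finset.card_le_card
    intro i hi
    simp only [Finset.mem_filter] at hi ⊢
    exact ⟨hi.1, hS i a b hab hi.2⟩
  refine ⟨fun i => Finset.univ.filter fun v => i.val < c v, ?_, ?_, ?_, ?_⟩
  · intro i j hij v hv
    simp only [Finset.mem_filter] at hv ⊢
    exact ⟨hv.1, lt_of_le_of_lt hij hv.2⟩
  · intro i a b hab hb
    simp only [Finset.mem_filter, Finset.mem_univ, true_and] at hb ⊢
    exact lt_of_lt_of_le hb (hmono a b hab)
  · intro a b hab
    have hsub : (Finset.univ.filter fun i => b ∈ S i) ⊆ (Finset.univ.filter fun i => a ∈ S i) := by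
      intro i hi
      simp only [Finset.mem_filter] at hi ⊢
      exact ⟨hi.1, hS i a b hab hi.2⟩
    have h1 : (Finset.univ.filter fun i => a ∈ S i ∧ b ∉ S i) =
        (Finset.univ.filter fun i => a ∈ S i) \ (Finset.univ.filter fun i => b ∈ S i) := by
      ext i; simp [and_comm]
    have h2 : (Finset.univ.filter fun i : Fin ℓ => a ∈ (Finset.univ.filter fun v => i.val < c v) ∧
        b ∉ (Finset.univ.filter fun v => i.val < c v)) =
        (Finset.univ.filter fun i : Fin ℓ => c b ≤ i.val ∧ i.val < c a) := by
      ext i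
      simp only [Finset.mem_filter, Finset.mem_univ, true_and, not_and, not_lt]
      omega
    rw [h1, h2, Finset.card_sdiff_of_subset hsub, card_filter_ico ℓ _ _ (hcle a)]
  · intro v
    have h := card_filter_ico ℓ 0 (c v) (hcle v)
    simp only [Nat.zero_le, true_and, Nat.sub_zero] at h
    simp only [Finset.mem_filter, Finset.mem_univ, true_and]
    exact h.symm
end

section
/- Let S_1,...,S_ℓ ⊆ V be subsets of the vertex set of a directed tree (V,U), each with δ^-(S_i) = ∅, and let x = ∑_{i=1}^ℓ χ^{δ^+(S_i)} ∈ Z^U. For vertices v, w ∈ V, let t_{vw} ∈ {-1,0,1}^U assign to each tree edge u the value +1 if the unique v–w path in the tree traverses u forwardly, -1 if backwardly, and 0 if the path avoids u. Then t_{vw}^T x = |{i : v ∈ S_i}| - |{i : w ∈ S_i}|. -/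
/-! The vector `x` is the sum of the coboundaries of the potentials `𝟙_{Sᵢ}`: since no arc enters
`Sᵢ`, an arc `(a, b)` leaves `Sᵢ` exactly when `𝟙_{Sᵢ}(a) - 𝟙_{Sᵢ}(b) = 1`, and otherwise this
difference is `0`. Pairing the signed incidence vector of a `v`–`w` path with the coboundary of
any potential `f` telescopes along the path to `f v - f w`. -/

namespace SimpleGraph.Walk

variable {V : Type*} [DecidableEq V] {G : SimpleGraph V}

/-- The signed incidence vector `t_{vw}` of the paper. -/
def arcSign {v w : V} (p : G.Walk v w) (u : V × V) : ℤ :=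
  if u ∈ p.darts.map Dart.toProd then 1
  else if u.swap ∈ p.darts.map Dart.toProd then -1 else 0

@[simp]
theorem arcSign_nil {v : V} (u : V × V) : (nil : G.Walk v v).arcSign u = 0 := by
  simp [arcSign]

theorem arcSign_cons {v a w : V} (h : G.Adj v a) (q : G.Walk a w) (hv : v ∉ q.support)
    (u : V × V) :
    (cons h q).arcSign u =
      q.arcSign u + (if u = (v, a) then 1 else 0) - (if u = (a, v) then 1 else 0) := by
  have hva : v ≠ a := G.ne_of_adj h
  have hfst : ∀ x, (v, x) ∉ q.darts.map Dart.toProd := by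
    rintro x hx
    obtain ⟨d, hd, hdv⟩ := List.mem_map.mp hx
    exact hv ((show d.fst = v from congrArg Prod.fst hdv) ▸
      q.dart_fst_mem_support_of_mem_darts hd)
  have hsnd : ∀ x, (x, v) ∉ q.darts.map Dart.toProd := by
    rintro x hx
    obtain ⟨d, hd, hdv⟩ := List.mem_map.mp hx
    exact hv ((show d.snd = v from congrArg Prod.snd hdv) ▸
      q.dart_snd_mem_support_of_mem_darts hd)
  by_cases h₁ : u = (v, a)
  · subst h₁
    simp [arcSign, hfst a, hsnd a, hva]
  by_cases h₂ : u = (a, v)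
  · subst h₂
    simp [arcSign, hfst a, hsnd a, hva, Ne.symm hva]
  have h₂' : u.swap ≠ (v, a) := fun e => h₂ (by rw [← Prod.swap_swap u, e]; rfl)
  simp only [arcSign, darts_cons, List.map_cons, List.mem_cons, h₁, h₂, h₂', false_or]
  simp

theorem sum_arcSign_smul_sub {M : Type*} [AddCommGroup M] {U : Finset (V × V)}
    (hU : ∀ a b, G.Adj a b → (a, b) ∈ U ∨ (b, a) ∈ U)
    (hanti : ∀ a b, (a, b) ∈ U → (b, a) ∉ U) (f : V → M) :
    ∀ {v w : V} (p : G.Walk v w), p.IsPath →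
      ∑ u ∈ U, p.arcSign u • (f u.1 - f u.2) = f v - f w
  | _, _, nil, _ => by simp
  | v, w, cons (v := a) h q, hp => by
    rw [cons_isPath_iff] at hp
    simp only [arcSign_cons h q hp.2, sub_smul, add_smul, ite_smul, one_smul, zero_smul,
      Finset.sum_sub_distrib, Finset.sum_add_distrib, Finset.sum_ite_eq',
      sum_arcSign_smul_sub hU hanti f q hp.1]
    rcases hU v a h with hva | hav
    · simp [hva, hanti v a hva]
    · simp [hav, hanti a v hav]

end SimpleGraph.Walk

theorem ite_and_not_eq_ite_sub_ite {P Q : Prop} [Decidable P] [Decidable Q] (h : Q → P) :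
    (if P ∧ ¬Q then (1 : ℤ) else 0) = (if P then 1 else 0) - (if Q then 1 else 0) := by
  by_cases hQ : Q <;> simp [hQ, h]

theorem stmt18_general (V : Type*) [DecidableEq V] (U : Finset (V × V))
    (hanti : ∀ a b : V, (a, b) ∈ U → (b, a) ∉ U)
    (G : SimpleGraph V) (hG : G = SimpleGraph.fromRel (fun a b => (a, b) ∈ U))
    (ℓ : ℕ) (S : Fin ℓ → Finset V)
    (hS : ∀ i : Fin ℓ, ∀ u ∈ U, u.2 ∈ S i → u.1 ∈ S i)
    (v w : V) (p : G.Walk v w) (hp : p.IsPath)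
    (t : V × V → ℤ)
    (ht : ∀ u ∈ U, t u =
      if (u.1, u.2) ∈ p.darts.map (fun d => d.toProd) then 1
      else if (u.2, u.1) ∈ p.darts.map (fun d => d.toProd) then -1 else 0) :
    (∑ u ∈ U, t u * (∑ i : Fin ℓ, if u.1 ∈ S i ∧ u.2 ∉ S i then (1 : ℤ) else 0)) =
      ((Finset.univ.filter fun i : Fin ℓ => v ∈ S i).card : ℤ) -
        ((Finset.univ.filter fun i : Fin ℓ => w ∈ S i).card : ℤ) := by
  have hU : ∀ a b, G.Adj a b → (a, b) ∈ U ∨ (b, a) ∈ U := fun a b hab => by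
    subst hG
    exact hab.2
  simp only [Finset.card_filter, Nat.cast_sum, Nat.cast_ite, Nat.cast_one, Nat.cast_zero,
    ← Finset.sum_sub_distrib, Finset.mul_sum]
  rw [Finset.sum_comm]
  refine Finset.sum_congr rfl fun i _ => ?_
  rw [← p.sum_arcSign_smul_sub hU hanti (fun z => if z ∈ S i then (1 : ℤ) else 0) hp]
  refine Finset.sum_congr rfl fun u hu => ?_
  rw [ht u hu, ite_and_not_eq_ite_sub_ite (hS i u hu), smul_eq_mul]
  rfl

/-- Let `(V,U)` be a directed tree, `S₁,...,S_ℓ ⊆ V` sets with no incoming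
arcs, and `x = ∑ χ^{δ⁺(Sᵢ)}`.  For vertices `v, w` let `t` assign to each tree arc `+1`/`-1`/`0`
according to whether the unique `v`–`w` path traverses it forwardly/backwardly/not at all.
Then `tᵀ x = |{i : v ∈ Sᵢ}| - |{i : w ∈ Sᵢ}|`. -/
theorem stmt18 (V : Type*) [Fintype V] [DecidableEq V] (U : Finset (V × V))
    (hloop : ∀ a : V, (a, a) ∉ U)
    (hanti : ∀ a b : V, (a, b) ∈ U → (b, a) ∉ U)
    (G : SimpleGraph V) (hG : G = SimpleGraph.fromRel (fun a b => (a, b) ∈ U))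
    (hTree : G.IsTree)
    (ℓ : ℕ) (S : Fin ℓ → Finset V)
    (hS : ∀ i : Fin ℓ, ∀ u ∈ U, u.2 ∈ S i → u.1 ∈ S i)
    (v w : V) (p : G.Walk v w) (hp : p.IsPath)
    (t : V × V → ℤ)
    (ht : ∀ u ∈ U, t u =
      if (u.1, u.2) ∈ p.darts.map (fun d => d.toProd) then 1
      else if (u.2, u.1) ∈ p.darts.map (fun d => d.toProd) then -1 else 0) :
    (∑ u ∈ U, t u * (∑ i : Fin ℓ, if u.1 ∈ S i ∧ u.2 ∉ S i then (1 : ℤ) else 0)) =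
      ((Finset.univ.filter fun i : Fin ℓ => v ∈ S i).card : ℤ) -
        ((Finset.univ.filter fun i : Fin ℓ => w ∈ S i).card : ℤ) :=
  stmt18_general V U hanti G hG ℓ S hS v w p hp t ht
end
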